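/- Suppose hypotheses (a1)–(a5) hold, f is three times continuously differentiable on (0,∞), f has exactly one critical point x₀ > 0 in (0,∞) (a maximum, so f'(x) > 0 for 0 < x < x₀ and f'(x) < 0 for x > x₀), the Schwarzian derivative (Sf)(x) = f'''(x)/f'(x) − (3/2)·(f''(x)/f'(x))² is negative for every x > 0 with x ≠ x₀, and |f'(K)| ≤ 1. Then every solution x of the initial value problem for the distributed-delay equation satisfies lim_{t→∞} x(t) = K. -/

import Mathlib

/-!
Two ingredients. First, a one-dimensional fact: a compact interval `[m, M] ⊂ (0, ∞)` with
`[m, M] ⊆ f [m, M]` is `{K}`. For unimodal `f` this reduces to `v < f (f v)` on `(0, K)`, i.e. to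
the absence of a 2-cycle `p < K < q`. For such a cycle the mean value theorem gives points on
both sides of `K` where `(f ∘ f)' ≥ 1`; but `(f ∘ f)'` has negative Schwarzian, so it has no
interior minimum (its inverse square root is strictly convex), which contradicts
`(f ∘ f)' K = f' K ^ 2 ≤ 1`.

Second, the dynamics: the solution is positive, bounded and bounded away from `0`. Since
`∫ r = ∞` and the delay windows `[h t, t]` drift to infinity, comparing `x` with the window means
of `f ∘ x` shows `liminf x ≥ min f` and `limsup x ≤ max f` on `[liminf x, limsup x]`, which is the
interval inclusion above.
-/

open MeasureTheory Filter Set Topology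

noncomputable def schwarzian (f' f'' f''' : ℝ → ℝ) (y : ℝ) : ℝ :=
  f''' y / f' y - (3 / 2) * (f'' y / f' y) ^ 2

section Schwarzian

variable {f' f'' f''' g g' g'' g''' : ℝ → ℝ} {v : ℝ}

theorem hasDerivAt_comp_mul_deriv (hf' : HasDerivAt f' (f'' (g v)) (g v))
    (hg : HasDerivAt g (g' v) v) (hg' : HasDerivAt g' (g'' v) v) :
    HasDerivAt (fun w => f' (g w) * g' w) (f'' (g v) * g' v ^ 2 + f' (g v) * g'' v) v :=
  ((hf'.comp v hg).mul hg').congr_deriv (by simp only [Function.comp_apply]; ring)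

theorem hasDerivAt_comp_mul_deriv_deriv (hf' : HasDerivAt f' (f'' (g v)) (g v))
    (hf'' : HasDerivAt f'' (f''' (g v)) (g v)) (hg : HasDerivAt g (g' v) v)
    (hg' : HasDerivAt g' (g'' v) v) (hg'' : HasDerivAt g'' (g''' v) v) :
    HasDerivAt (fun w => f'' (g w) * g' w ^ 2 + f' (g w) * g'' w)
      (f''' (g v) * g' v ^ 3 + 3 * f'' (g v) * g' v * g'' v + f' (g v) * g''' v) v :=
  (((hf''.comp v hg).mul (hg'.pow 2)).add ((hf'.comp v hg).mul hg'')).congr_deriv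
    (by simp only [Function.comp_apply, Pi.pow_apply]; push_cast; ring)

theorem schwarzian_comp (hf : f' (g v) ≠ 0) (hg : g' v ≠ 0) :
    schwarzian (fun w => f' (g w) * g' w) (fun w => f'' (g w) * g' w ^ 2 + f' (g w) * g'' w)
        (fun w => f''' (g w) * g' w ^ 3 + 3 * f'' (g w) * g' w * g'' w + f' (g w) * g''' w) v =
      schwarzian f' f'' f''' (g v) * g' v ^ 2 + schwarzian g' g'' g''' v := by
  simp only [schwarzian]
  field_simp
  ring

end Schwarzian

section MinimumPrinciple

variable {G G' G'' : ℝ → ℝ} {a b : ℝ}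

/-- `((√G)⁻¹)'' = -(√G)⁻¹ · schwarzian G G' G'' / 2`. -/
theorem strictConvexOn_inv_sqrt_of_schwarzian_neg (hpos : ∀ v ∈ Icc a b, 0 < G v)
    (hG : ∀ v ∈ Icc a b, HasDerivAt G (G' v) v) (hG' : ∀ v ∈ Icc a b, HasDerivAt G' (G'' v) v)
    (hS : ∀ v ∈ Icc a b, schwarzian G G' G'' v < 0) :
    StrictConvexOn ℝ (Icc a b) (fun v => (√(G v))⁻¹) := by
  set H₁ : ℝ → ℝ := fun v => -G' v / (2 * √(G v) * G v)
  have hsqrt : ∀ v ∈ Icc a b, HasDerivAt (fun v => √(G v)) (G' v / (2 * √(G v))) v :=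
    fun v hv => ((Real.hasDerivAt_sqrt (hpos v hv).ne').comp v (hG v hv)).congr_deriv
      (by ring)
  have hH : ∀ v ∈ Icc a b, HasDerivAt (fun v => (√(G v))⁻¹) (H₁ v) v := by
    intro v hv
    refine ((hsqrt v hv).inv (Real.sqrt_pos.2 (hpos v hv)).ne').congr_deriv ?_
    have hs := Real.sqrt_pos.2 (hpos v hv)
    simp only [H₁]
    rw [Real.sq_sqrt (hpos v hv).le]
    field_simp
  have hH₁ : ∀ v ∈ Icc a b,
      HasDerivAt H₁ (-(√(G v))⁻¹ / 2 * schwarzian G G' G'' v) v := by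
    intro v hv
    have hs := Real.sqrt_pos.2 (hpos v hv)
    refine ((hG' v hv).neg.div (((hsqrt v hv).const_mul 2).mul (hG v hv))
      (mul_pos (mul_pos two_pos hs) (hpos v hv)).ne').congr_deriv ?_
    obtain ⟨s, hs, e⟩ : ∃ s, 0 < s ∧ √(G v) = s := ⟨_, hs, rfl⟩
    have hGs : G v = s ^ 2 := by rw [← e, Real.sq_sqrt (hpos v hv).le]
    simp only [schwarzian, Pi.mul_apply, Pi.neg_apply]
    rw [e, hGs]
    field_simp
    ring
  refine StrictMonoOn.strictConvexOn_of_deriv (convex_Icc a b)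
    (fun v hv => (hH v hv).continuousAt.continuousWithinAt) ?_
  rw [interior_Icc]
  have hmono : StrictMonoOn H₁ (Icc a b) := by
    refine strictMonoOn_of_deriv_pos (convex_Icc a b)
      (fun v hv => (hH₁ v hv).continuousAt.continuousWithinAt) fun v hv => ?_
    rw [interior_Icc] at hv
    have hv' := Ioo_subset_Icc_self hv
    rw [(hH₁ v hv').deriv]
    have := Real.sqrt_pos.2 (hpos v hv')
    have := hS v hv'
    have : 0 < (√(G v))⁻¹ := by positivity
    nlinarith
  intro u hu w hw huw
  rw [(hH u (Ioo_subset_Icc_self hu)).deriv, (hH w (Ioo_subset_Icc_self hw)).deriv]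
  exact hmono (Ioo_subset_Icc_self hu) (Ioo_subset_Icc_self hw) huw

theorem min_lt_of_schwarzian_neg (hpos : ∀ v ∈ Icc a b, 0 < G v)
    (hG : ∀ v ∈ Icc a b, HasDerivAt G (G' v) v) (hG' : ∀ v ∈ Icc a b, HasDerivAt G' (G'' v) v)
    (hS : ∀ v ∈ Icc a b, schwarzian G G' G'' v < 0) {c : ℝ} (hc : c ∈ Ioo a b) :
    min (G a) (G b) < G c := by
  have hab : a < b := hc.1.trans hc.2
  have ha := left_mem_Icc.2 hab.le
  have hb := right_mem_Icc.2 hab.le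
  have hlt := (strictConvexOn_inv_sqrt_of_schwarzian_neg hpos hG hG' hS).lt_on_openSegment ha hb
    hab.ne (by rwa [openSegment_eq_Ioo hab])
  have key : ∀ v ∈ Icc a b, (√(G c))⁻¹ < (√(G v))⁻¹ → G v < G c := fun v hv h => by
    rwa [inv_lt_inv₀ (Real.sqrt_pos.2 (hpos c (Ioo_subset_Icc_self hc)))
      (Real.sqrt_pos.2 (hpos v hv)), Real.sqrt_lt_sqrt_iff (hpos v hv).le] at h
  rcases lt_max_iff.1 hlt with h | h
  · exact (min_le_left _ _).trans_lt (key a ha h)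
  · exact (min_le_right _ _).trans_lt (key b hb h)

end MinimumPrinciple

section UnimodalMap

variable {f f' f'' f''' : ℝ → ℝ} {K x₀ : ℝ}

theorem apply_eq_self_of_lt_of_gt (hf : Continuous f) (hK : 0 < K)
    (hbelow : ∀ y, 0 < y → y < K → y < f y) (habove : ∀ y, K < y → f y < y) : f K = K := by
  refine le_antisymm ?_ ?_
  · have : Ici K ⊆ {y | f y ≤ y} := by
      rw [← closure_Ioi]
      exact closure_minimal (fun y hy => (habove y hy).le) (isClosed_le hf continuous_id)
    exact this (mem_Ici.2 le_rfl)
  · have : Icc 0 K ⊆ {y | y ≤ f y} := by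
      rw [← closure_Ioo hK.ne]
      exact closure_minimal (fun y hy => (hbelow y hy.1 hy.2).le) (isClosed_le continuous_id hf)
    exact this (right_mem_Icc.2 hK.le)

theorem apply_pos (hfK : f K = K) (hbelow : ∀ y, 0 < y → y < K → y < f y)
    (habove : ∀ y, K < y → 0 < f y) {y : ℝ} (hy : 0 < y) : 0 < f y := by
  rcases lt_trichotomy y K with hyK | rfl | hyK
  exacts [hy.trans (hbelow y hy hyK), hfK.symm ▸ hy, habove y hyK]

theorem min_le_apply_of_mem_Icc (hmono : MonotoneOn f (Icc 0 x₀)) (hanti : AntitoneOn f (Ici x₀))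
    {a b v : ℝ} (ha : 0 ≤ a) (hv : v ∈ Icc a b) : min (f a) (f b) ≤ f v := by
  rcases le_total v x₀ with hvx | hxv
  · exact (min_le_left _ _).trans (hmono ⟨ha, hv.1.trans hvx⟩ ⟨ha.trans hv.1, hvx⟩ hv.1)
  · exact (min_le_right _ _).trans (hanti hxv (hxv.trans hv.2) hv.2)

theorem apply_le_apply_of_nonneg (hx₀ : 0 ≤ x₀) (hmono : MonotoneOn f (Icc 0 x₀))
    (hanti : AntitoneOn f (Ici x₀)) {v : ℝ} (hv : 0 ≤ v) : f v ≤ f x₀ := by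
  rcases le_total v x₀ with hvx | hxv
  · exact hmono ⟨hv, hvx⟩ ⟨hx₀, le_rfl⟩ hvx
  · exact hanti (mem_Ici.2 le_rfl) hxv hxv

theorem one_lt_deriv_sq_of_expanding (hf : Continuous f) (hx₀ : 0 < x₀)
    (hd1 : ∀ y, 0 < y → HasDerivAt f (f' y) y) (hd2 : ∀ y, 0 < y → HasDerivAt f' (f'' y) y)
    (hd3 : ∀ y, 0 < y → HasDerivAt f'' (f''' y) y) (hdecr : ∀ y, x₀ < y → f' y < 0)
    (hS : ∀ y, 0 < y → y ≠ x₀ → schwarzian f' f'' f''' y < 0) (hfK : f K = K)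
    {α β : ℝ} (hα : x₀ ≤ α) (hαK : α < K) (hKβ : K < β) (hfβ : ∀ v ∈ Ioo α β, x₀ < f v)
    (hgα : f (f α) ≤ α) (hgβ : β ≤ f (f β)) : 1 < f' K ^ 2 := by
  have hinside : ∀ v ∈ Ioo α β, x₀ < v ∧ x₀ < f v := fun v hv => ⟨hα.trans_lt hv.1, hfβ v hv⟩
  have hg : ∀ v ∈ Ioo α β, HasDerivAt (fun w => f (f w)) (f' (f v) * f' v) v := fun v hv =>
    (hd1 _ (hx₀.trans (hinside v hv).2)).comp v (hd1 v (hx₀.trans (hinside v hv).1))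
  obtain ⟨a, ha, hga⟩ := exists_hasDerivAt_eq_slope (fun w => f (f w)) _ hαK
    (hf.comp hf).continuousOn fun v hv => hg v ⟨hv.1, hv.2.trans hKβ⟩
  obtain ⟨b, hb, hgb⟩ := exists_hasDerivAt_eq_slope (fun w => f (f w)) _ hKβ
    (hf.comp hf).continuousOn fun v hv => hg v ⟨hαK.trans hv.1, hv.2⟩
  have h1a : 1 ≤ f' (f a) * f' a := by
    rw [hga, hfK, hfK, le_div_iff₀ (by linarith)]
    linarith
  have h1b : 1 ≤ f' (f b) * f' b := by
    rw [hgb, hfK, hfK, le_div_iff₀ (by linarith)]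
    linarith
  have hab : Icc a b ⊆ Ioo α β := Icc_subset_Ioo ha.1 hb.2
  have hmin : min (f' (f a) * f' a) (f' (f b) * f' b) < f' (f K) * f' K := by
    refine min_lt_of_schwarzian_neg (G := fun w => f' (f w) * f' w)
      (G' := fun w => f'' (f w) * f' w ^ 2 + f' (f w) * f'' w)
      (G'' := fun w => f''' (f w) * f' w ^ 3 + 3 * f'' (f w) * f' w * f'' w + f' (f w) * f''' w)
      (fun v hv => ?_) (fun v hv => ?_) (fun v hv => ?_) (fun v hv => ?_) ⟨ha.2, hb.1⟩ <;>
    obtain ⟨hv₀, hfv₀⟩ := hinside v (hab hv)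
    · exact mul_pos_of_neg_of_neg (hdecr _ hfv₀) (hdecr _ hv₀)
    · exact hasDerivAt_comp_mul_deriv (hd2 _ (hx₀.trans hfv₀)) (hd1 _ (hx₀.trans hv₀))
        (hd2 _ (hx₀.trans hv₀))
    · exact hasDerivAt_comp_mul_deriv_deriv (hd2 _ (hx₀.trans hfv₀)) (hd3 _ (hx₀.trans hfv₀))
        (hd1 _ (hx₀.trans hv₀)) (hd2 _ (hx₀.trans hv₀)) (hd3 _ (hx₀.trans hv₀))
    · rw [schwarzian_comp (hdecr _ hfv₀).ne (hdecr _ hv₀).ne]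
      have := hS _ (hx₀.trans hfv₀) hfv₀.ne'
      have := hS _ (hx₀.trans hv₀) hv₀.ne'
      nlinarith [sq_nonneg (f' v)]
  simp only [hfK] at hmin
  nlinarith [le_min h1a h1b]

theorem apply_apply_ne_self (hf : Continuous f) (hx₀ : 0 < x₀)
    (hd1 : ∀ y, 0 < y → HasDerivAt f (f' y) y) (hd2 : ∀ y, 0 < y → HasDerivAt f' (f'' y) y)
    (hd3 : ∀ y, 0 < y → HasDerivAt f'' (f''' y) y) (hdecr : ∀ y, x₀ < y → f' y < 0)
    (hS : ∀ y, 0 < y → y ≠ x₀ → schwarzian f' f'' f''' y < 0) (hKderiv : |f' K| ≤ 1)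
    (hfK : f K = K) (hbelow : ∀ y, 0 < y → y < K → y < f y)
    (hmono : StrictMonoOn f (Icc 0 x₀)) (hanti : StrictAntiOn f (Ici x₀))
    {p : ℝ} (hp : 0 < p) (hpK : p < K) : f (f p) ≠ p := by
  intro hcycle
  obtain ⟨q, hq⟩ : ∃ q, f p = q := ⟨_, rfl⟩
  rw [hq] at hcycle
  have hpq : p < q := hq ▸ hbelow p hp hpK
  have hKq : K < q := by
    rcases lt_trichotomy q K with h | rfl | h
    · linarith [hbelow q (hp.trans hpq) h]
    · linarith
    · exact h
  refine not_lt.2 ((sq_le_one_iff_abs_le_one _).2 hKderiv) ?_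
  rcases le_or_gt x₀ p with hxp | hpx
  · refine one_lt_deriv_sq_of_expanding hf hx₀ hd1 hd2 hd3 hdecr hS hfK hxp hpK hKq
      (fun v hv => ?_) (by rw [hq, hcycle]) (by rw [hcycle, hq])
    calc x₀ ≤ p := hxp
      _ = f q := hcycle.symm
      _ < f v := hanti (hxp.trans hv.1.le) (hxp.trans hpq.le) hv.2
  · have hxK : x₀ < K := by
      by_contra! hKx
      have := hmono ⟨hp.le, hpx.le⟩ ⟨hp.le.trans hpK.le, hKx⟩ hpK
      linarith
    obtain ⟨v₁, hv₁, hfv₁⟩ : x₀ ∈ f '' Icc K q :=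
      intermediate_value_Icc' hKq.le hf.continuousOn ⟨by linarith, by linarith⟩
    have hKv₁ : K < v₁ := hv₁.1.lt_of_ne (by rintro rfl; linarith)
    have hqx : q ≤ f x₀ := hq ▸ hmono.monotoneOn ⟨hp.le, hpx.le⟩ ⟨hx₀.le, le_rfl⟩ hpx.le
    refine one_lt_deriv_sq_of_expanding hf hx₀ hd1 hd2 hd3 hdecr hS hfK le_rfl hxK hKv₁
      (fun v hv => hfv₁ ▸ hanti hv.1.le (hxK.trans hKv₁).le hv.2) ?_
      (by rw [hfv₁]; linarith [hv₁.2])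
    calc f (f x₀) ≤ f q := hanti.antitoneOn (hxK.trans hKq).le ((hxK.trans hKq).le.trans hqx) hqx
      _ ≤ x₀ := by linarith

theorem lt_apply_apply (hf : Continuous f) (hf0 : f 0 = 0) (hK : 0 < K)
    (hbelow : ∀ y, 0 < y → y < K → y < f y) (hne : ∀ p, 0 < p → p < K → f (f p) ≠ p)
    {v : ℝ} (hv : 0 < v) (hvK : v < K) : v < f (f v) := by
  obtain ⟨w, hfw, hw⟩ : ∃ w, f w < K ∧ w ∈ Ioo 0 v :=
    ((((hf.tendsto 0).eventually (eventually_lt_nhds (by rwa [hf0] : f 0 < K))).filter_mono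
      nhdsWithin_le_nhds).and (Ioo_mem_nhdsGT hv)).exists
  have hwfw : w < f w := hbelow w hw.1 (hw.2.trans hvK)
  have hgw : w < f (f w) := hwfw.trans (hbelow _ (hw.1.trans hwfw) hfw)
  by_contra! hle
  obtain ⟨z, hz, hgz⟩ : (0 : ℝ) ∈ (fun y => f (f y) - y) '' Icc w v :=
    intermediate_value_Icc' (f := fun y => f (f y) - y) hw.2.le
      ((hf.comp hf).sub continuous_id).continuousOn ⟨by linarith, by linarith⟩
  exact hne z (hw.1.trans_le hz.1) (hz.2.trans_lt hvK) (by simp only at hgz; linarith)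

theorem eq_of_Icc_subset_image (hx₀ : 0 < x₀) (hfK : f K = K)
    (hbelow : ∀ y, 0 < y → y < K → y < f y) (habove : ∀ y, K < y → f y < y)
    (hmono : MonotoneOn f (Icc 0 x₀)) (hanti : AntitoneOn f (Ici x₀))
    (hgt : ∀ v, 0 < v → v < K → v < f (f v)) {m M : ℝ} (hm : 0 < m) (hmM : m ≤ M)
    (hJ : Icc m M ⊆ f '' Icc m M) : m = K ∧ M = K := by
  obtain ⟨v, hv, hfv⟩ := hJ (left_mem_Icc.2 hmM)
  obtain ⟨w, hw, hfw⟩ := hJ (right_mem_Icc.2 hmM)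
  have hlow : min (f m) (f M) ≤ m := (min_le_apply_of_mem_Icc hmono hanti hm.le hv).trans_eq hfv
  have hup : M ≤ f x₀ :=
    hfw.symm.trans_le (apply_le_apply_of_nonneg hx₀.le hmono hanti (hm.le.trans hw.1))
  have hle_self : ∀ y, K ≤ y → f y ≤ y := fun y hy => by
    rcases hy.eq_or_lt with rfl | hy
    exacts [hfK.le, (habove y hy).le]
  have hmK : m = K := by
    refine le_antisymm ?_ ?_
    · by_contra! hKm
      linarith [habove w (hKm.trans_le hw.1), hw.2]
    by_contra! hmK
    have hfM : f M ≤ m := by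
      linarith [min_le_iff.1 hlow |>.resolve_left (not_le.2 (hbelow m hm hmK))]
    -- `f (f z) ≤ f M ≤ m ≤ z` for `z = m` or `z = x₀`, contradicting `hgt` at `z < K`
    rcases le_or_gt M x₀ with hMx | hxM
    · linarith [hbelow m hm hmK, hmono ⟨hm.le, hmM.trans hMx⟩ ⟨hm.le.trans hmM, hMx⟩ hmM]
    rcases le_or_gt x₀ m with hxm | hmx
    · have hMfm : M ≤ f m := hfw ▸ hanti hxm (hxm.trans hw.1) hw.1
      linarith [hgt m hm hmK, hanti (hxm.trans hmM) (hxm.trans (hmM.trans hMfm)) hMfm]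
    · have hxK : x₀ < K := by
        by_contra! hKx
        linarith [hle_self x₀ hKx]
      linarith [hgt x₀ hx₀ hxK, hanti hxM.le (hxM.le.trans hup) hup]
  subst hmK
  have hwK : f w ≤ w := hle_self w hw.1
  have hwM : w = M := le_antisymm hw.2 (by linarith)
  refine ⟨rfl, le_antisymm ?_ (hw.1.trans hwM.le)⟩
  by_contra! hKM
  linarith [habove M hKM, hwM ▸ hfw]

end UnimodalMap

section CrossingTimes

variable {x : ℝ → ℝ} {a b c : ℝ}

theorem exists_last_le (hx : Continuous x) (hab : a ≤ b) (ha : x a ≤ c) :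
    ∃ σ ∈ Icc a b, x σ ≤ c ∧ ∀ u ∈ Ioc σ b, c < x u := by
  set S := Icc a b ∩ {s | x s ≤ c}
  have hbdd : BddAbove S := ⟨b, fun s hs => hs.1.2⟩
  obtain ⟨hσ, hxσ⟩ := (isClosed_Icc.inter (isClosed_le hx continuous_const)).csSup_mem
    ⟨a, left_mem_Icc.2 hab, ha⟩ hbdd
  refine ⟨sSup S, hσ, hxσ, fun u hu => ?_⟩
  by_contra! hxu
  exact (not_le.2 hu.1) (le_csSup hbdd ⟨⟨hσ.1.trans hu.1.le, hu.2⟩, hxu⟩)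

theorem exists_first_eq (hx : Continuous x) (hab : a ≤ b) (ha : c < x a) (hb : x b ≤ c) :
    ∃ t ∈ Ioc a b, x t = c ∧ ∀ s ∈ Ico a t, c < x s := by
  set S := Icc a b ∩ {s | x s ≤ c}
  have hbdd : BddBelow S := ⟨a, fun s hs => hs.1.1⟩
  obtain ⟨ht, hxt⟩ := (isClosed_Icc.inter (isClosed_le hx continuous_const)).csInf_mem
    ⟨b, right_mem_Icc.2 hab, hb⟩ hbdd
  have hbefore : ∀ s ∈ Ico a (sInf S), c < x s := fun s hs => by
    by_contra! hxs
    exact (not_le.2 hs.2) (csInf_le hbdd ⟨⟨hs.1, hs.2.le.trans ht.2⟩, hxs⟩)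
  have hat : a < sInf S := ht.1.lt_of_ne fun h => (not_le.2 ha) (h ▸ hxt)
  refine ⟨sInf S, ⟨hat, ht.2⟩, le_antisymm hxt ?_, hbefore⟩
  have : Icc a (sInf S) ⊆ {s | c ≤ x s} := by
    rw [← closure_Ico hat.ne]
    exact closure_minimal (fun s hs => (hbefore s hs).le) (isClosed_le continuous_const hx)
  exact this (right_mem_Icc.2 hat.le)

end CrossingTimes

structure IsPrimitiveOnNonneg (x g : ℝ → ℝ) : Prop where
  intervalIntegrable : ∀ a b, 0 ≤ a → a ≤ b → IntervalIntegrable g volume a b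
  sub_eq : ∀ a b, 0 ≤ a → a ≤ b → x b - x a = ∫ u in a..b, g u

namespace IsPrimitiveOnNonneg

variable {x g r : ℝ → ℝ} {a b c η : ℝ}

theorem neg (hxg : IsPrimitiveOnNonneg x g) : IsPrimitiveOnNonneg (fun t => -x t) fun u => -g u :=
  ⟨fun a b ha hab => (hxg.intervalIntegrable a b ha hab).neg, fun a b ha hab => by
    rw [intervalIntegral.integral_neg, ← hxg.sub_eq a b ha hab]
    ring⟩

theorem le_of_forall_lt_imp_nonpos (hxg : IsPrimitiveOnNonneg x g) (hx : Continuous x)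
    (ha : 0 ≤ a) (hab : a ≤ b) (hxa : x a ≤ c) (hg : ∀ u ∈ Ioc a b, c < x u → g u ≤ 0) :
    x b ≤ c := by
  obtain ⟨σ, hσ, hxσ, habove⟩ := exists_last_le hx hab hxa
  have : x b - x σ ≤ 0 := by
    rw [hxg.sub_eq σ b (ha.trans hσ.1) hσ.2, intervalIntegral.integral_of_le hσ.2]
    exact setIntegral_nonpos measurableSet_Ioc fun u hu =>
      hg u ⟨hσ.1.trans_lt hu.1, hu.2⟩ (habove u hu)
  linarith

theorem le_of_forall_lt_imp_nonneg (hxg : IsPrimitiveOnNonneg x g) (hx : Continuous x)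
    (ha : 0 ≤ a) (hab : a ≤ b) (hxa : c ≤ x a) (hg : ∀ u ∈ Ioc a b, x u < c → 0 ≤ g u) :
    c ≤ x b := by
  have := hxg.neg.le_of_forall_lt_imp_nonpos hx.neg ha hab (c := -c) (by linarith)
    fun u hu hxu => neg_nonpos.2 (hg u hu (by linarith))
  linarith

/-- After the maximum point `ρ` of `x` on `[a, b]`, `x' ≥ -r x ≥ -r · x ρ`. -/
theorem one_sub_integral_mul_le (hxg : IsPrimitiveOnNonneg x g) (hx : Continuous x)
    (hr : ∀ u, 0 ≤ r u) (hri : IntervalIntegrable r volume a b) (ha : 0 ≤ a) (hab : a ≤ b)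
    (hxa : 0 ≤ x a) (hr1 : ∫ u in a..b, r u ≤ 1) (hg : ∀ u ∈ Ioc a b, -(r u * x u) ≤ g u) :
    (1 - ∫ u in a..b, r u) * x a ≤ x b := by
  obtain ⟨ρ, hρ, hmax⟩ := isCompact_Icc.exists_isMaxOn (nonempty_Icc.2 hab) hx.continuousOn
  have hxρ : x a ≤ x ρ := hmax (left_mem_Icc.2 hab)
  have hriρ : IntervalIntegrable r volume ρ b :=
    hri.mono_set (uIcc_subset_uIcc (Icc_subset_uIcc hρ) (right_mem_uIcc))
  have hdecay : -(x ρ * ∫ u in ρ..b, r u) ≤ x b - x ρ := by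
    rw [hxg.sub_eq ρ b (ha.trans hρ.1) hρ.2, ← intervalIntegral.integral_const_mul,
      ← intervalIntegral.integral_neg]
    refine intervalIntegral.integral_mono_on_of_le_Ioo hρ.2 (hriρ.const_mul _).neg
      (hxg.intervalIntegrable ρ b (ha.trans hρ.1) hρ.2) fun u hu => ?_
    have hu' : u ∈ Icc a b := ⟨hρ.1.trans hu.1.le, hu.2.le⟩
    have := mul_le_mul_of_nonneg_left (hmax hu' : x u ≤ x ρ) (hr u)
    linarith [hg u ⟨hρ.1.trans_lt hu.1, hu.2.le⟩]
  have hmass : ∫ u in ρ..b, r u ≤ ∫ u in a..b, r u :=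
    intervalIntegral.integral_mono_interval hρ.1 hρ.2 le_rfl (ae_of_all _ hr) hri
  nlinarith

/-- If `x` stayed above `c` it would fall by at least `η ∫ r = ∞`; once below `c`, it stays. -/
theorem eventually_le_of_drift (hxg : IsPrimitiveOnNonneg x g) (hx : Continuous x)
    (hr : ∀ u, 0 ≤ r u) (hri : ∀ a b, IntervalIntegrable r volume a b)
    (hR : Tendsto (fun t => ∫ u in (0 : ℝ)..t, r u) atTop atTop)
    (hlb : ∃ c₀, ∀ t, 0 ≤ t → c₀ ≤ x t) (hη : 0 < η)
    (hdrift : ∀ᶠ u in atTop, c < x u → g u ≤ -(η * r u)) : ∀ᶠ t in atTop, x t ≤ c := by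
  obtain ⟨c₀, hc₀⟩ := hlb
  obtain ⟨T, hT⟩ := eventually_atTop.1 (hdrift.and (eventually_ge_atTop 0))
  have hT0 : 0 ≤ T := (hT T le_rfl).2
  obtain ⟨t₁, ht₁, hxt₁⟩ : ∃ t₁, T ≤ t₁ ∧ x t₁ ≤ c := by
    by_contra! hno
    obtain ⟨t, hTt, ht⟩ := ((eventually_ge_atTop T).and (hR.eventually_ge_atTop
      ((x T - c₀) / η + 1 + ∫ u in (0 : ℝ)..T, r u))).exists
    have hxt : x t - x T ≤ -(η * ∫ u in T..t, r u) := by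
      rw [hxg.sub_eq T t hT0 hTt, ← intervalIntegral.integral_const_mul,
        ← intervalIntegral.integral_neg]
      exact intervalIntegral.integral_mono_on_of_le_Ioo hTt (hxg.intervalIntegrable T t hT0 hTt)
        ((hri T t).const_mul η).neg fun u hu => (hT u hu.1.le).1 (hno u hu.1.le)
    have hmass : (x T - c₀) / η + 1 ≤ ∫ u in T..t, r u := by
      rw [← intervalIntegral.integral_interval_sub_left (hri 0 t) (hri 0 T)]
      linarith
    have hkey : x T - c₀ + η ≤ η * ∫ u in T..t, r u := by
      calc x T - c₀ + η = η * ((x T - c₀) / η + 1) := by field_simp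
        _ ≤ η * ∫ u in T..t, r u := mul_le_mul_of_nonneg_left hmass hη.le
    linarith [hc₀ t (hT0.trans hTt)]
  filter_upwards [eventually_ge_atTop t₁] with t ht
  exact hxg.le_of_forall_lt_imp_nonpos hx (hT0.trans ht₁) ht hxt₁ fun u hu hcu =>
    ((hT u (ht₁.trans hu.1.le)).1 hcu).trans (neg_nonpos.2 (mul_nonneg hη.le (hr u)))

theorem eventually_ge_of_drift (hxg : IsPrimitiveOnNonneg x g) (hx : Continuous x)
    (hr : ∀ u, 0 ≤ r u) (hri : ∀ a b, IntervalIntegrable r volume a b)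
    (hR : Tendsto (fun t => ∫ u in (0 : ℝ)..t, r u) atTop atTop)
    (hub : ∃ c₀, ∀ t, 0 ≤ t → x t ≤ c₀) (hη : 0 < η)
    (hdrift : ∀ᶠ u in atTop, x u < c → η * r u ≤ g u) : ∀ᶠ t in atTop, c ≤ x t := by
  obtain ⟨c₀, hc₀⟩ := hub
  have := hxg.neg.eventually_le_of_drift hx.neg hr hri hR ⟨-c₀, fun t ht => neg_le_neg (hc₀ t ht)⟩
    hη (c := -c) (hdrift.mono fun u hu hxu => neg_le_neg (hu (neg_lt_neg_iff.1 hxu)))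
  exact this.mono fun t ht => neg_le_neg_iff.1 ht

end IsPrimitiveOnNonneg

/-- What the proof uses of `F u = ∫ y dμ_u` for probability measures `μ_u` on `[h u, u]`. -/
structure IsWindowMean (h y F : ℝ → ℝ) : Prop where
  le : ∀ u, 0 ≤ u → ∀ c, (∀ s ∈ Icc (h u) u, y s ≤ c) → F u ≤ c
  ge : ∀ u, 0 ≤ u → ∀ c, (∀ s ∈ Icc (h u) u, c ≤ y s) → c ≤ F u

theorem IsWindowMean.abs_le {h y F : ℝ → ℝ} (hF : IsWindowMean h y F) {T C : ℝ}
    (hy : ∀ s ≤ T, |y s| ≤ C) {u : ℝ} (hu : u ∈ Icc 0 T) : |F u| ≤ C :=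
  _root_.abs_le.2 ⟨hF.ge u hu.1 _ fun s hs => (_root_.abs_le.1 (hy s (hs.2.trans hu.2))).1,
    hF.le u hu.1 _ fun s hs => (_root_.abs_le.1 (hy s (hs.2.trans hu.2))).2⟩

theorem exists_abs_comp_le {f x : ℝ → ℝ} (hf : Continuous f) (hx : Continuous x)
    (hx0 : ∃ C, ∀ t ≤ 0, |x t| ≤ C) (T : ℝ) : ∃ C, ∀ t ≤ T, |f (x t)| ≤ C := by
  obtain ⟨C₁, hC₁⟩ := hx0
  obtain ⟨C₂, hC₂⟩ := (isCompact_Icc (a := 0) (b := T)).exists_bound_of_continuousOn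
    hx.continuousOn
  obtain ⟨C, hC⟩ := (isCompact_Icc (a := -max C₁ C₂) (b := max C₁ C₂)).exists_bound_of_continuousOn
    hf.continuousOn
  refine ⟨C, fun t ht => hC _ (abs_le.1 ?_)⟩
  rcases le_total t 0 with h | h
  · exact (hC₁ t h).trans (le_max_left _ _)
  · exact (hC₂ t ⟨h, ht⟩).trans (le_max_right _ _)

section DelayIntegral

variable {h y : ℝ → ℝ} {μ : ℝ → Measure ℝ}

theorem isWindowMean_integral (hμ_prob : ∀ t, 0 ≤ t → IsProbabilityMeasure (μ t))
    (hμ_supp : ∀ t, 0 ≤ t → μ t (Icc (h t) t)ᶜ = 0) (hy : Continuous y)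
    (hyb : ∀ T, ∃ C, ∀ s ≤ T, |y s| ≤ C) : IsWindowMean h y fun u => ∫ s, y s ∂μ u := by
  have hwin : ∀ u, 0 ≤ u → ∀ᵐ s ∂μ u, s ∈ Icc (h u) u :=
    fun u hu => mem_ae_iff.2 (hμ_supp u hu)
  have hint : ∀ u, 0 ≤ u → Integrable y (μ u) := fun u hu => by
    obtain ⟨C, hC⟩ := hyb u
    have := hμ_prob u hu
    exact (integrable_const C).mono' hy.aestronglyMeasurable
      ((hwin u hu).mono fun s hs => hC s hs.2)
  constructor
  · intro u hu c hc
    have := hμ_prob u hu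
    calc ∫ s, y s ∂μ u ≤ ∫ _, c ∂μ u :=
          integral_mono_ae (hint u hu) (integrable_const c) ((hwin u hu).mono hc)
      _ = c := by simp
  · intro u hu c hc
    have := hμ_prob u hu
    calc c = ∫ _, c ∂μ u := by simp
      _ ≤ ∫ s, y s ∂μ u := integral_mono_ae (integrable_const c) (hint u hu) ((hwin u hu).mono hc)

/-- The kernel only sees `y` on `(-∞, u]`, so freezing `y` after time `T` gives a bounded
integrand to which the measurability hypothesis on `μ` applies. -/
theorem exists_measurable_eqOn_integral (hμ_supp : ∀ t, 0 ≤ t → μ t (Icc (h t) t)ᶜ = 0)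
    (hμ_meas : ∀ g : ℝ → ℝ, Measurable g → (∃ C : ℝ, ∀ y : ℝ, |g y| ≤ C) →
      Measurable (fun t => ∫ s, g s ∂(μ t)))
    (hy : Continuous y) (hyb : ∀ T, ∃ C, ∀ s ≤ T, |y s| ≤ C) (T : ℝ) :
    ∃ F : ℝ → ℝ, Measurable F ∧ EqOn (fun u => ∫ s, y s ∂μ u) F (Icc 0 T) := by
  obtain ⟨C, hC⟩ := hyb T
  refine ⟨fun u => ∫ s, y (min s T) ∂μ u,
    hμ_meas _ (hy.comp (continuous_id.min continuous_const)).measurable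
      ⟨C, fun s => hC _ (min_le_right _ _)⟩, fun u hu => ?_⟩
  have hwin : ∀ᵐ s ∂μ u, s ∈ Icc (h u) u := mem_ae_iff.2 (hμ_supp u hu.1)
  exact integral_congr_ae (hwin.mono fun s hs => by simp only [min_eq_left (hs.2.trans hu.2)])

end DelayIntegral

theorem isPrimitiveOnNonneg_of_eq_add_integral {x r F : ℝ → ℝ} {c : ℝ}
    (hr_meas : Measurable r) (hr_bdd : ∃ C, ∀ᵐ t ∂volume, r t ≤ C) (hr_nonneg : ∀ t, 0 ≤ r t)
    (hx : Continuous x) (hFb : ∀ T, ∃ C, ∀ u ∈ Icc 0 T, |F u| ≤ C)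
    (hFm : ∀ T, ∃ F' : ℝ → ℝ, Measurable F' ∧ EqOn F F' (Icc 0 T))
    (hsol : ∀ t, 0 ≤ t → x t = c + ∫ u in (0 : ℝ)..t, r u * (F u - x u)) :
    IsPrimitiveOnNonneg x fun u => r u * (F u - x u) := by
  have hint : ∀ a b, 0 ≤ a → a ≤ b →
      IntervalIntegrable (fun u => r u * (F u - x u)) volume a b := by
    intro a b ha hab
    obtain ⟨Cr, hCr⟩ := hr_bdd
    obtain ⟨D, hD⟩ := hFb b
    obtain ⟨F', hF'm, hFF'⟩ := hFm b
    obtain ⟨B, hB⟩ := (isCompact_Icc (a := 0) (b := b)).exists_bound_of_continuousOn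
      hx.continuousOn
    have hsub : uIoc a b ⊆ Icc 0 b := by
      rw [uIoc_of_le hab]
      exact fun u hu => ⟨ha.trans hu.1.le, hu.2⟩
    refine (intervalIntegrable_const (c := Cr * (D + B))).mono_fun' ?_ ?_
    · refine (hr_meas.mul (hF'm.sub hx.measurable)).aestronglyMeasurable.congr ?_
      refine (ae_restrict_iff' measurableSet_uIoc).2 (Eventually.of_forall fun u hu => ?_)
      simp only [Pi.mul_apply, Pi.sub_apply, hFF' (hsub hu)]
    · refine (ae_restrict_iff' measurableSet_uIoc).2 (hCr.mono fun u hru hu => ?_)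
      change |r u * (F u - x u)| ≤ Cr * (D + B)
      rw [abs_mul, abs_of_nonneg (hr_nonneg u)]
      have hFx : |F u - x u| ≤ D + B :=
        (abs_sub _ _).trans (add_le_add (hD u (hsub hu)) (by simpa using hB u (hsub hu)))
      exact mul_le_mul hru hFx (abs_nonneg _) ((hr_nonneg u).trans hru)
  refine ⟨hint, fun a b ha hab => ?_⟩
  rw [hsol b (ha.trans hab), hsol a ha, ← intervalIntegral.integral_interval_sub_left
    (hint 0 b le_rfl (ha.trans hab)) (hint 0 a le_rfl ha)]
  ring

section KernelRate

variable {r : ℝ → ℝ}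

theorem intervalIntegrable_of_ae_le (hr_meas : Measurable r) (hr_nonneg : ∀ t, 0 ≤ r t)
    (hr_bdd : ∃ C, ∀ᵐ t ∂volume, r t ≤ C) (a b : ℝ) : IntervalIntegrable r volume a b := by
  obtain ⟨C, hC⟩ := hr_bdd
  refine (intervalIntegrable_const (c := C)).mono_fun' hr_meas.aestronglyMeasurable
    (ae_restrict_of_ae (hC.mono fun t ht => ?_))
  change |r t| ≤ C
  rwa [abs_of_nonneg (hr_nonneg t)]

theorem tendsto_integral_of_not_integrableOn (hr_nonneg : ∀ t, 0 ≤ r t)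
    (hri : ∀ a b, IntervalIntegrable r volume a b) (hr_div : ¬ IntegrableOn r (Ici (0 : ℝ))) :
    Tendsto (fun t => ∫ u in (0 : ℝ)..t, r u) atTop atTop := by
  have hmono : Monotone fun t => ∫ u in (0 : ℝ)..t, r u := fun s t hst => by
    have := intervalIntegral.integral_interval_sub_left (hri 0 t) (hri 0 s)
    have := intervalIntegral.integral_nonneg (μ := volume) hst fun u _ => hr_nonneg u
    linarith
  refine tendsto_atTop_atTop_of_monotone hmono fun M => ?_
  by_contra! hM
  apply hr_div
  rw [integrableOn_Ici_iff_integrableOn_Ioi]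
  refine integrableOn_Ioi_of_intervalIntegral_norm_bounded M 0 (fun i => (hri 0 i).1) tendsto_id
    (Eventually.of_forall fun i => ?_)
  simp_rw [Real.norm_eq_abs, abs_of_nonneg (hr_nonneg _)]
  exact (hM i).le

end KernelRate

theorem eventually_forall_Icc_of_tendsto {h : ℝ → ℝ} (hh : Tendsto h atTop atTop) {p : ℝ → Prop}
    (hp : ∀ᶠ t in atTop, p t) : ∀ᶠ u in atTop, ∀ s ∈ Icc (h u) u, p s := by
  obtain ⟨T, hT⟩ := eventually_atTop.1 hp
  filter_upwards [hh.eventually_ge_atTop T] with u hu s hs using hT s (hu.trans hs.1)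

theorem exists_forall_Ioo_lt_of_forall_Icc_lt {f : ℝ → ℝ} (hf : Continuous f) {a b c : ℝ}
    (hab : a ≤ b) (h : ∀ v ∈ Icc a b, f v < c) :
    ∃ c' < c, ∃ δ > 0, ∀ v ∈ Ioo (a - δ) (b + δ), f v < c' := by
  obtain ⟨v₀, hv₀, hmax⟩ := isCompact_Icc.exists_isMaxOn (nonempty_Icc.2 hab) hf.continuousOn
  have hsub : Icc a b ⊆ f ⁻¹' Iio ((f v₀ + c) / 2) := fun v hv =>
    show f v < (f v₀ + c) / 2 from (hmax hv : f v ≤ f v₀).trans_lt (by linarith [h v₀ hv₀])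
  obtain ⟨δ, hδ, hthick⟩ :=
    isCompact_Icc.exists_thickening_subset_open (isOpen_Iio.preimage hf) hsub
  refine ⟨(f v₀ + c) / 2, by linarith [h v₀ hv₀], δ, hδ, fun v hv => hthick ?_⟩
  rw [Metric.mem_thickening_iff]
  rcases lt_or_ge v a with hva | hav
  · refine ⟨a, left_mem_Icc.2 hab, ?_⟩
    rw [Real.dist_eq, abs_sub_lt_iff]
    constructor <;> linarith [hv.1]
  rcases le_or_gt v b with hvb | hbv
  · exact ⟨v, ⟨hav, hvb⟩, by simpa using hδ⟩
  · refine ⟨b, right_mem_Icc.2 hab, ?_⟩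
    rw [Real.dist_eq, abs_sub_lt_iff]
    constructor <;> linarith [hv.2]

section DelayDynamics

variable {x r h f F : ℝ → ℝ}

theorem pos_of_isWindowMean (hx : Continuous x)
    (hxg : IsPrimitiveOnNonneg x fun u => r u * (F u - x u))
    (hF : IsWindowMean h (fun s => f (x s)) F) (hr : ∀ u, 0 ≤ r u)
    (hri : ∀ a b, IntervalIntegrable r volume a b) (hf : ∀ y, 0 ≤ y → 0 ≤ f y)
    (hx0 : ∀ t ≤ 0, 0 ≤ x t) (hxpos : 0 < x 0) {t : ℝ} (ht : 0 ≤ t) : 0 < x t := by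
  by_contra! hxt
  obtain ⟨t₁, ht₁, hxt₁, hbefore⟩ := exists_first_eq hx ht hxpos hxt
  have hnonneg : ∀ s ≤ t₁, 0 ≤ x s := fun s hs => by
    rcases le_or_gt s 0 with h0 | h0
    · exact hx0 s h0
    rcases hs.lt_or_eq with hlt | rfl
    · exact (hbefore s ⟨h0.le, hlt⟩).le
    · exact hxt₁.ge
  have hcont : Continuous fun a => ∫ u in a..t₁, r u :=
    (intervalIntegral.continuous_primitive hri t₁).neg.congr fun a =>
      (intervalIntegral.integral_symm t₁ a).symm
  obtain ⟨a, hra, ha⟩ := (((hcont.tendsto t₁).eventually (eventually_lt_nhds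
    (by simp : ∫ u in t₁..t₁, r u < 1 / 2))).filter_mono nhdsWithin_le_nhds |>.and
    (Ioo_mem_nhdsLT ht₁.1)).exists
  have hmass : 0 ≤ ∫ u in a..t₁, r u := intervalIntegral.integral_nonneg ha.2.le fun u _ => hr u
  -- on `[a, t₁]` the solution keeps at least half of `x a > 0`, yet `x t₁ = 0`
  have hdecay := hxg.one_sub_integral_mul_le hx hr (hri a t₁) ha.1.le ha.2.le
    (hnonneg a ha.2.le) (by linarith) fun u hu => by
      have := hF.ge u (ha.1.le.trans hu.1.le) 0 fun s hs => hf _ (hnonneg s (hs.2.trans hu.2))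
      nlinarith [hr u]
  have hxa := hbefore a ⟨ha.1.le, ha.2⟩
  rw [hxt₁] at hdecay
  nlinarith

theorem le_max_of_isWindowMean (hx : Continuous x)
    (hxg : IsPrimitiveOnNonneg x fun u => r u * (F u - x u))
    (hF : IsWindowMean h (fun s => f (x s)) F) (hr : ∀ u, 0 ≤ r u) {A : ℝ}
    (hfA : ∀ y, 0 ≤ y → f y ≤ A) (hxnn : ∀ t, 0 ≤ x t) {t : ℝ} (ht : 0 ≤ t) :
    x t ≤ max (x 0) A :=
  hxg.le_of_forall_lt_imp_nonpos hx le_rfl ht (le_max_left _ _) fun u hu hxu =>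
    mul_nonpos_of_nonneg_of_nonpos (hr u) (by
      linarith [hF.le u hu.1.le A fun s _ => hfA _ (hxnn s), le_max_right (x 0) A])

/-- Take `ε` below `K`, `f B` and `x` on `[0, T]`, where after `T` the windows lie in `[0, ∞)`.
Until `x` first reaches `ε`, the window values lie in `[ε, B]`, where the unimodal `f` is at least
`min (f ε) (f B) > ε`; so `x` cannot fall below that level, let alone reach `ε`. -/
theorem exists_pos_le_of_isWindowMean (hx : Continuous x)
    (hxg : IsPrimitiveOnNonneg x fun u => r u * (F u - x u))
    (hF : IsWindowMean h (fun s => f (x s)) F) (hr : ∀ u, 0 ≤ r u)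
    (hh : Tendsto h atTop atTop) {K x₀ B : ℝ} (hK : 0 < K) (hfpos : ∀ y, 0 < y → 0 < f y)
    (hbelow : ∀ y, 0 < y → y < K → y < f y) (hmono : MonotoneOn f (Icc 0 x₀))
    (hanti : AntitoneOn f (Ici x₀)) (hxpos : ∀ t, 0 ≤ t → 0 < x t)
    (hxB : ∀ t, 0 ≤ t → x t ≤ B) : ∃ ε > 0, ∀ t, 0 ≤ t → ε ≤ x t := by
  obtain ⟨T, hT⟩ := eventually_atTop.1 ((hh.eventually_ge_atTop 0).and (eventually_ge_atTop 0))
  have hT0 : 0 ≤ T := (hT T le_rfl).2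
  obtain ⟨t₀, ht₀, hmin⟩ := isCompact_Icc.exists_isMinOn (nonempty_Icc.2 hT0) hx.continuousOn
  have hB : 0 < B := (hxpos 0 le_rfl).trans_le (hxB 0 le_rfl)
  have hpos : 0 < min (min K (f B)) (x t₀) := lt_min (lt_min hK (hfpos B hB)) (hxpos t₀ ht₀.1)
  set ε := min (min K (f B)) (x t₀) / 2 with hε_def
  have hε : 0 < ε := by positivity
  have hεK : ε < K := by linarith [min_le_left (min K (f B)) (x t₀), min_le_left K (f B)]
  have hεB : ε < f B := by linarith [min_le_left (min K (f B)) (x t₀), min_le_right K (f B)]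
  have hεx : ε < x t₀ := by linarith [min_le_right (min K (f B)) (x t₀)]
  refine ⟨ε, hε, fun t ht => ?_⟩
  by_contra! hxt
  obtain ⟨t₃, ht₃, hxt₃, hbefore⟩ :=
    exists_first_eq hx ht (hεx.trans_le (hmin ⟨le_rfl, hT0⟩)) hxt.le
  have hTt₃ : T ≤ t₃ := by
    by_contra! hlt
    have : x t₀ ≤ x t₃ := hmin ⟨ht₃.1.le, hlt.le⟩
    linarith
  have hge : ∀ s ∈ Icc 0 t₃, ε ≤ x s := fun s hs => by
    rcases hs.2.lt_or_eq with hlt | rfl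
    exacts [(hbefore s ⟨hs.1, hlt⟩).le, hxt₃.ge]
  have hbarrier := hxg.le_of_forall_lt_imp_nonneg hx hT0 hTt₃
    (c := min (min (f ε) (f B)) (x t₀)) ((min_le_right _ _).trans (hmin ⟨hT0, le_rfl⟩))
    fun u hu hxu => by
      have hu0 : 0 ≤ h u := (hT u hu.1.le).1
      have hFu : min (f ε) (f B) ≤ F u := hF.ge u (hT0.trans hu.1.le) _ fun s hs =>
        min_le_apply_of_mem_Icc hmono hanti hε.le
          ⟨hge s ⟨hu0.trans hs.1, hs.2.trans hu.2⟩, hxB s (hu0.trans hs.1)⟩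
      exact mul_nonneg (hr u) (by linarith [min_le_left (min (f ε) (f B)) (x t₀)])
  have : ε < min (min (f ε) (f B)) (x t₀) := lt_min (lt_min (hbelow ε hε hεK) hεB) hεx
  linarith

theorem limsup_le_of_eventually_le (hx : Continuous x)
    (hxg : IsPrimitiveOnNonneg x fun u => r u * (F u - x u)) (hr : ∀ u, 0 ≤ r u)
    (hri : ∀ a b, IntervalIntegrable r volume a b)
    (hR : Tendsto (fun t => ∫ u in (0 : ℝ)..t, r u) atTop atTop)
    (hlb : ∃ c₀, ∀ t, 0 ≤ t → c₀ ≤ x t) {b : ℝ} (hFb : ∀ᶠ u in atTop, F u ≤ b) :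
    limsup x atTop ≤ b := by
  obtain ⟨c₀, hc₀⟩ := hlb
  refine le_of_forall_pos_le_add fun η hη => limsup_le_of_le
    (isCoboundedUnder_le_of_eventually_le atTop ((eventually_ge_atTop 0).mono hc₀))
    (hxg.eventually_le_of_drift hx hr hri hR ⟨c₀, hc₀⟩ hη (hFb.mono fun u hFu hxu => ?_))
  calc r u * (F u - x u) ≤ r u * -η := mul_le_mul_of_nonneg_left (by linarith) (hr u)
    _ = -(η * r u) := by ring

theorem le_liminf_of_eventually_ge (hx : Continuous x)
    (hxg : IsPrimitiveOnNonneg x fun u => r u * (F u - x u)) (hr : ∀ u, 0 ≤ r u)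
    (hri : ∀ a b, IntervalIntegrable r volume a b)
    (hR : Tendsto (fun t => ∫ u in (0 : ℝ)..t, r u) atTop atTop)
    (hub : ∃ c₁, ∀ t, 0 ≤ t → x t ≤ c₁) {a : ℝ} (hFa : ∀ᶠ u in atTop, a ≤ F u) :
    a ≤ liminf x atTop := by
  obtain ⟨c₁, hc₁⟩ := hub
  refine le_of_forall_pos_le_add fun η hη => ?_
  have := le_liminf_of_le
    (isCoboundedUnder_ge_of_eventually_le atTop ((eventually_ge_atTop 0).mono hc₁))
    (hxg.eventually_ge_of_drift hx hr hri hR ⟨c₁, hc₁⟩ hη (c := a - η)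
      (hFa.mono fun u hFu hxu => ?_))
  · linarith
  calc η * r u = r u * η := mul_comm _ _
    _ ≤ r u * (F u - x u) := mul_le_mul_of_nonneg_left (by linarith) (hr u)

theorem Icc_liminf_limsup_subset_image (hx : Continuous x)
    (hxg : IsPrimitiveOnNonneg x fun u => r u * (F u - x u))
    (hF : IsWindowMean h (fun s => f (x s)) F) (hr : ∀ u, 0 ≤ r u)
    (hri : ∀ a b, IntervalIntegrable r volume a b)
    (hR : Tendsto (fun t => ∫ u in (0 : ℝ)..t, r u) atTop atTop) (hh : Tendsto h atTop atTop)
    (hf : Continuous f) (hlb : ∃ c₀, ∀ t, 0 ≤ t → c₀ ≤ x t)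
    (hub : ∃ c₁, ∀ t, 0 ≤ t → x t ≤ c₁) :
    Icc (liminf x atTop) (limsup x atTop) ⊆ f '' Icc (liminf x atTop) (limsup x atTop) := by
  set m := liminf x atTop
  set M := limsup x atTop
  have hbdd_le : IsBoundedUnder (· ≤ ·) atTop x := by
    obtain ⟨c₁, hc₁⟩ := hub
    exact ⟨c₁, eventually_map.2 ((eventually_ge_atTop 0).mono hc₁)⟩
  have hbdd_ge : IsBoundedUnder (· ≥ ·) atTop x := by
    obtain ⟨c₀, hc₀⟩ := hlb
    exact ⟨c₀, eventually_map.2 ((eventually_ge_atTop 0).mono hc₀)⟩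
  have hmM : m ≤ M := liminf_le_limsup hbdd_le hbdd_ge
  have hwin : ∀ δ > 0, ∀ᶠ u in atTop, 0 ≤ u ∧ ∀ s ∈ Icc (h u) u, x s ∈ Ioo (m - δ) (M + δ) :=
    fun δ hδ => (eventually_ge_atTop 0).and (eventually_forall_Icc_of_tendsto hh
      ((eventually_lt_of_lt_liminf (by linarith : m - δ < m) hbdd_ge).and
        (eventually_lt_of_limsup_lt (by linarith : M < M + δ) hbdd_le)))
  obtain ⟨v, hv, hfv⟩ : ∃ v ∈ Icc m M, f v ≤ m := by
    by_contra! hlt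
    obtain ⟨c, hc, δ, hδ, hnear⟩ := exists_forall_Ioo_lt_of_forall_Icc_lt hf.neg hmM
      (c := -m) fun v hv => neg_lt_neg (hlt v hv)
    have := le_liminf_of_eventually_ge hx hxg hr hri hR hub ((hwin δ hδ).mono
      fun u hu => hF.ge u hu.1 (-c) fun s hs => by
        have : -f (x s) < c := hnear _ (hu.2 s hs)
        linarith)
    linarith
  obtain ⟨w, hw, hfw⟩ : ∃ w ∈ Icc m M, M ≤ f w := by
    by_contra! hlt
    obtain ⟨c, hc, δ, hδ, hnear⟩ := exists_forall_Ioo_lt_of_forall_Icc_lt hf hmM hlt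
    have := limsup_le_of_eventually_le hx hxg hr hri hR hlb ((hwin δ hδ).mono
      fun u hu => hF.le u hu.1 c fun s hs => (hnear _ (hu.2 s hs)).le)
    linarith
  calc Icc m M ⊆ uIcc (f v) (f w) := (Icc_subset_Icc hfv hfw).trans Icc_subset_uIcc
    _ ⊆ f '' uIcc v w := intermediate_value_uIcc hf.continuousOn
    _ ⊆ f '' Icc m M := image_mono (uIcc_subset_Icc hv hw)

end DelayDynamics

theorem tendsto_of_Icc_liminf_limsup_subset_image {f x : ℝ → ℝ} {K x₀ ε B : ℝ} (hx₀ : 0 < x₀)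
    (hfK : f K = K) (hbelow : ∀ y, 0 < y → y < K → y < f y) (habove : ∀ y, K < y → f y < y)
    (hmono : MonotoneOn f (Icc 0 x₀)) (hanti : AntitoneOn f (Ici x₀))
    (hgt : ∀ v, 0 < v → v < K → v < f (f v)) (hε : 0 < ε) (hxε : ∀ t, 0 ≤ t → ε ≤ x t)
    (hxB : ∀ t, 0 ≤ t → x t ≤ B)
    (hJ : Icc (liminf x atTop) (limsup x atTop) ⊆ f '' Icc (liminf x atTop) (limsup x atTop)) :
    Tendsto x atTop (𝓝 K) := by
  have hbdd_le : IsBoundedUnder (· ≤ ·) atTop x :=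
    ⟨B, eventually_map.2 (eventually_atTop.2 ⟨0, hxB⟩)⟩
  have hbdd_ge : IsBoundedUnder (· ≥ ·) atTop x :=
    ⟨ε, eventually_map.2 (eventually_atTop.2 ⟨0, hxε⟩)⟩
  have hm : 0 < liminf x atTop :=
    hε.trans_le (le_liminf_of_le hbdd_le.isCoboundedUnder_ge (eventually_atTop.2 ⟨0, hxε⟩))
  obtain ⟨hmK, hMK⟩ := eq_of_Icc_subset_image hx₀ hfK hbelow habove hmono hanti hgt hm
    (liminf_le_limsup hbdd_le hbdd_ge) hJ
  exact tendsto_of_liminf_eq_limsup hmK hMK hbdd_le hbdd_ge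

theorem isWindowMean_and_isPrimitiveOnNonneg {f r h x φ : ℝ → ℝ} {μ : ℝ → Measure ℝ}
    (hf_cont : Continuous f) (hr_meas : Measurable r) (hr_nonneg : ∀ t : ℝ, 0 ≤ r t)
    (hr_bdd : ∃ C : ℝ, ∀ᵐ t ∂volume, r t ≤ C)
    (hμ_prob : ∀ t : ℝ, 0 ≤ t → IsProbabilityMeasure (μ t))
    (hμ_supp : ∀ t : ℝ, 0 ≤ t → μ t (Icc (h t) t)ᶜ = 0)
    (hμ_meas : ∀ g : ℝ → ℝ, Measurable g → (∃ C : ℝ, ∀ y : ℝ, |g y| ≤ C) →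
      Measurable (fun t => ∫ s, g s ∂(μ t)))
    (hφ_bdd : ∃ C : ℝ, ∀ t : ℝ, t ≤ 0 → |φ t| ≤ C) (hx_cont : Continuous x)
    (hx_init : ∀ t : ℝ, t ≤ 0 → x t = φ t)
    (hx_sol : ∀ t : ℝ, 0 ≤ t →
      x t = φ 0 + ∫ u in (0:ℝ)..t, r u * ((∫ s, f (x s) ∂(μ u)) - x u)) :
    IsWindowMean h (fun s => f (x s)) (fun u => ∫ s, f (x s) ∂μ u) ∧
      IsPrimitiveOnNonneg x fun u => r u * ((∫ s, f (x s) ∂μ u) - x u) := by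
  have hyb := exists_abs_comp_le hf_cont hx_cont
    (hφ_bdd.imp fun C hC t ht => hx_init t ht ▸ hC t ht)
  have hF := isWindowMean_integral hμ_prob hμ_supp (hf_cont.comp hx_cont) hyb
  exact ⟨hF, isPrimitiveOnNonneg_of_eq_add_integral hr_meas hr_bdd hr_nonneg hx_cont
    (fun T => (hyb T).imp fun C hC u hu => hF.abs_le hC hu)
    (exists_measurable_eqOn_integral hμ_supp hμ_meas (hf_cont.comp hx_cont) hyb) hx_sol⟩

theorem strictMonoOn_Icc_and_strictAntiOn_Ici {f f' : ℝ → ℝ} {x₀ : ℝ} (hf : Continuous f)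
    (hx₀ : 0 < x₀) (hd1 : ∀ y, 0 < y → HasDerivAt f (f' y) y)
    (hincr : ∀ y, 0 < y → y < x₀ → 0 < f' y) (hdecr : ∀ y, x₀ < y → f' y < 0) :
    StrictMonoOn f (Icc 0 x₀) ∧ StrictAntiOn f (Ici x₀) := by
  refine ⟨strictMonoOn_of_hasDerivWithinAt_pos (f' := f') (convex_Icc 0 x₀) hf.continuousOn
    (fun v hv => ?_) (fun v hv => ?_), strictAntiOn_of_hasDerivWithinAt_neg (f' := f')
    (convex_Ici x₀) hf.continuousOn (fun v hv => ?_) (fun v hv => ?_)⟩ <;>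
    simp only [interior_Icc, interior_Ici, mem_Ioo, mem_Ioi] at hv
  exacts [(hd1 v hv.1).hasDerivWithinAt, hincr v hv.1 hv.2,
    (hd1 v (hx₀.trans hv)).hasDerivWithinAt, hdecr v hv]

theorem distributed_delay_schwarzian_stability_general
    (f : ℝ → ℝ) (K : ℝ) (hK : 0 < K)
    (h r : ℝ → ℝ) (μ : ℝ → Measure ℝ) (φ : ℝ → ℝ)
    (hf_cont : Continuous f)
    (hf_nonneg : ∀ y : ℝ, 0 ≤ y → 0 ≤ f y)
    (hf_zero : f 0 = 0)
    (hf_below : ∀ y : ℝ, 0 < y → y < K → y < f y)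
    (hf_above : ∀ y : ℝ, K < y → 0 < f y ∧ f y < y)
    (hh_tend : Tendsto h atTop atTop)
    (hr_meas : Measurable r)
    (hr_nonneg : ∀ t : ℝ, 0 ≤ r t)
    (hr_bdd : ∃ C : ℝ, ∀ᵐ t ∂volume, r t ≤ C)
    (hr_div : ¬ IntegrableOn r (Ici (0 : ℝ)))
    (hμ_prob : ∀ t : ℝ, 0 ≤ t → IsProbabilityMeasure (μ t))
    (hμ_supp : ∀ t : ℝ, 0 ≤ t → μ t (Icc (h t) t)ᶜ = 0)
    (hμ_meas : ∀ g : ℝ → ℝ, Measurable g → (∃ C : ℝ, ∀ y : ℝ, |g y| ≤ C) →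
      Measurable (fun t => ∫ s, g s ∂(μ t)))
    (hφ_bdd : ∃ C : ℝ, ∀ t : ℝ, t ≤ 0 → |φ t| ≤ C)
    (hφ_nonneg : ∀ t : ℝ, t ≤ 0 → 0 ≤ φ t)
    (hφ_pos : 0 < φ 0)
    (f' f'' f''' : ℝ → ℝ) (x₀ : ℝ) (hx₀ : 0 < x₀)
    (hd1 : ∀ y : ℝ, 0 < y → HasDerivAt f (f' y) y)
    (hd2 : ∀ y : ℝ, 0 < y → HasDerivAt f' (f'' y) y)
    (hd3 : ∀ y : ℝ, 0 < y → HasDerivAt f'' (f''' y) y)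
    (hincr : ∀ y : ℝ, 0 < y → y < x₀ → 0 < f' y)
    (hdecr : ∀ y : ℝ, x₀ < y → f' y < 0)
    (hSchwarz : ∀ y : ℝ, 0 < y → y ≠ x₀ →
      f''' y / f' y - (3 / 2) * (f'' y / f' y) ^ 2 < 0)
    (hKderiv : |f' K| ≤ 1)
    (x : ℝ → ℝ)
    (hx_cont : Continuous x)
    (hx_init : ∀ t : ℝ, t ≤ 0 → x t = φ t)
    (hx_sol : ∀ t : ℝ, 0 ≤ t →
      x t = φ 0 + ∫ u in (0:ℝ)..t, r u * ((∫ s, f (x s) ∂(μ u)) - x u))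
    :
    Tendsto x atTop (nhds K) := by
  have hfK := apply_eq_self_of_lt_of_gt hf_cont hK hf_below fun y hy => (hf_above y hy).2
  obtain ⟨hmono, hanti⟩ := strictMonoOn_Icc_and_strictAntiOn_Ici hf_cont hx₀ hd1 hincr hdecr
  have hgt : ∀ v, 0 < v → v < K → v < f (f v) := fun _ hv hvK =>
    lt_apply_apply hf_cont hf_zero hK hf_below (fun _ hp hpK => apply_apply_ne_self hf_cont hx₀
      hd1 hd2 hd3 hdecr hSchwarz hKderiv hfK hf_below hmono hanti hp hpK) hv hvK
  have hri := intervalIntegrable_of_ae_le hr_meas hr_nonneg hr_bdd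
  obtain ⟨hF, hxg⟩ := isWindowMean_and_isPrimitiveOnNonneg hf_cont hr_meas hr_nonneg hr_bdd
    hμ_prob hμ_supp hμ_meas hφ_bdd hx_cont hx_init hx_sol
  have hx0 : ∀ t ≤ 0, 0 ≤ x t := fun t ht => hx_init t ht ▸ hφ_nonneg t ht
  have hxpos := fun t (ht : 0 ≤ t) => pos_of_isWindowMean hx_cont hxg hF hr_nonneg hri hf_nonneg
    hx0 (hx_init 0 le_rfl ▸ hφ_pos) ht
  have hxB := fun t (ht : 0 ≤ t) => le_max_of_isWindowMean hx_cont hxg hF hr_nonneg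
    (fun y hy => apply_le_apply_of_nonneg hx₀.le hmono.monotoneOn hanti.antitoneOn hy)
    (fun t => (le_or_gt t 0).elim (hx0 t) fun ht => (hxpos t ht.le).le) ht
  obtain ⟨ε, hε, hxε⟩ := exists_pos_le_of_isWindowMean hx_cont hxg hF hr_nonneg hh_tend hK
    (fun _ => apply_pos hfK hf_below fun y hy => (hf_above y hy).1) hf_below
    hmono.monotoneOn hanti.antitoneOn hxpos hxB
  exact tendsto_of_Icc_liminf_limsup_subset_image hx₀ hfK hf_below (fun y hy => (hf_above y hy).2)
    hmono.monotoneOn hanti.antitoneOn hgt hε hxε hxB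
    (Icc_liminf_limsup_subset_image hx_cont hxg hF hr_nonneg hri
      (tendsto_integral_of_not_integrableOn hr_nonneg hri hr_div) hh_tend hf_cont ⟨ε, hxε⟩ ⟨_, hxB⟩)

theorem distributed_delay_schwarzian_stability
    (f : ℝ → ℝ) (L K : ℝ) (hL : 0 ≤ L) (hK : 0 < K)
    (h r : ℝ → ℝ) (μ : ℝ → Measure ℝ) (φ : ℝ → ℝ)
    (hf_cont : Continuous f)
    (hf_nonneg : ∀ y : ℝ, 0 ≤ y → 0 ≤ f y)
    (hf_lip : ∀ u v : ℝ, 0 ≤ u → 0 ≤ v → |f u - f v| ≤ L * |u - v|)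
    (hf_zero : f 0 = 0)
    (hf_below : ∀ y : ℝ, 0 < y → y < K → y < f y)
    (hf_above : ∀ y : ℝ, K < y → 0 < f y ∧ f y < y)
    (hh_meas : Measurable h)
    (hh_le : ∀ t : ℝ, 0 ≤ t → h t ≤ t)
    (hh_tend : Tendsto h atTop atTop)
    (hr_meas : Measurable r)
    (hr_nonneg : ∀ t : ℝ, 0 ≤ r t)
    (hr_bdd : ∃ C : ℝ, ∀ᵐ t ∂volume, r t ≤ C)
    (hr_div : ¬ IntegrableOn r (Ici (0 : ℝ)))
    (hμ_prob : ∀ t : ℝ, 0 ≤ t → IsProbabilityMeasure (μ t))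
    (hμ_supp : ∀ t : ℝ, 0 ≤ t → μ t (Icc (h t) t)ᶜ = 0)
    (hμ_meas : ∀ g : ℝ → ℝ, Measurable g → (∃ C : ℝ, ∀ y : ℝ, |g y| ≤ C) →
      Measurable (fun t => ∫ s, g s ∂(μ t)))
    (hφ_cont : ContinuousOn φ (Iic (0 : ℝ)))
    (hφ_bdd : ∃ C : ℝ, ∀ t : ℝ, t ≤ 0 → |φ t| ≤ C)
    (hφ_nonneg : ∀ t : ℝ, t ≤ 0 → 0 ≤ φ t)
    (hφ_pos : 0 < φ 0)
    (f' f'' f''' : ℝ → ℝ) (x₀ : ℝ) (hx₀ : 0 < x₀)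
    (hd1 : ∀ y : ℝ, 0 < y → HasDerivAt f (f' y) y)
    (hd2 : ∀ y : ℝ, 0 < y → HasDerivAt f' (f'' y) y)
    (hd3 : ∀ y : ℝ, 0 < y → HasDerivAt f'' (f''' y) y)
    (hd3_cont : ContinuousOn f''' (Ioi (0 : ℝ)))
    (hcrit : f' x₀ = 0)
    (hincr : ∀ y : ℝ, 0 < y → y < x₀ → 0 < f' y)
    (hdecr : ∀ y : ℝ, x₀ < y → f' y < 0)
    (hSchwarz : ∀ y : ℝ, 0 < y → y ≠ x₀ →
      f''' y / f' y - (3 / 2) * (f'' y / f' y) ^ 2 < 0)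
    (hKderiv : |f' K| ≤ 1)
    (x : ℝ → ℝ)
    (hx_cont : Continuous x)
    (hx_init : ∀ t : ℝ, t ≤ 0 → x t = φ t)
    (hx_sol : ∀ t : ℝ, 0 ≤ t →
      x t = φ 0 + ∫ u in (0:ℝ)..t, r u * ((∫ s, f (x s) ∂(μ u)) - x u))
    :
    Tendsto x atTop (nhds K) :=
  distributed_delay_schwarzian_stability_general f K hK h r μ φ hf_cont hf_nonneg hf_zero hf_below
    hf_above hh_tend hr_meas hr_nonneg hr_bdd hr_div hμ_prob hμ_supp hμ_meas hφ_bdd hφ_nonneg hφ_pos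
    f' f'' f''' x₀ hx₀ hd1 hd2 hd3 hincr hdecr hSchwarz hKderiv x hx_cont hx_init hx_sol
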